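/- arXiv:1812.04522 — 3 statements merged into one kernel-verified Lean document; each statement's English description precedes it below -/
import Mathlib

section
/- Let l < z < u and define the single-breakpoint lifting L(d) = (min(d,z), max(d−z,0)) for d ∈ [l,u]. Then the convex hull of the image Ξ′ = L([l,u]) equals the triangle {(d₁,d₂) ∈ ℝ² : d₁ ≤ z, d₂ ≥ 0, (d₁ − l)/(z − l) ≥ d₂/(u − z)}. -/
/-!
The lift sends `[l, z]` and `[z, u]` onto the edges from `(l, 0)` to `(z, 0)` and from `(z, 0)` to
`(z, u - z)` of the triangle, which is convex, so the hull lies in the triangle. Conversely a point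
`(d₁, d₂)` of the triangle is the convex combination of the three vertices `L l`, `L z`, `L u`
with weights `(z - d₁) / (z - l)`, `1 - (z - d₁) / (z - l) - d₂ / (u - z)` and `d₂ / (u - z)`.
-/

open Set

theorem Convex.add_add_smul_mem {𝕜 E : Type*} [Field 𝕜] [LinearOrder 𝕜] [IsStrictOrderedRing 𝕜]
    [AddCommGroup E] [Module 𝕜 E] {s : Set E} (hs : Convex 𝕜 s) {x y w : E}
    (hx : x ∈ s) (hy : y ∈ s) (hw : w ∈ s) {a b c : 𝕜} (ha : 0 ≤ a) (hb : 0 ≤ b) (hc : 0 ≤ c)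
    (habc : a + b + c = 1) : a • x + b • y + c • w ∈ s := by
  simpa [Fin.sum_univ_three] using hs.sum_mem (t := Finset.univ) (w := ![a, b, c])
    (z := ![x, y, w]) (by simp [Fin.forall_fin_succ, ha, hb, hc])
    (by simp [Fin.sum_univ_three, habc]) (by simp [Fin.forall_fin_succ, hx, hy, hw])

def breakpointLift (z d : ℝ) : ℝ × ℝ := (min d z, max (d - z) 0)

theorem breakpointLift_of_le {z d : ℝ} (h : d ≤ z) : breakpointLift z d = (d, 0) := by
  simp [breakpointLift, h]

theorem breakpointLift_of_ge {z d : ℝ} (h : z ≤ d) : breakpointLift z d = (z, d - z) := by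
  simp [breakpointLift, h]

def liftTriangle (l z u : ℝ) : Set (ℝ × ℝ) :=
  {p | p.1 ≤ z ∧ 0 ≤ p.2 ∧ p.2 / (u - z) ≤ (p.1 - l) / (z - l)}

theorem convex_liftTriangle (l z u : ℝ) : Convex ℝ (liftTriangle l z u) := by
  rintro ⟨p₁, p₂⟩ ⟨hp₁, hp₂, hp₃⟩ ⟨q₁, q₂⟩ ⟨hq₁, hq₂, hq₃⟩ a b ha hb hab
  simp only [liftTriangle, Prod.smul_mk, Prod.mk_add_mk, smul_eq_mul, mem_ofPred_eq] at *
  refine ⟨?_, by positivity, ?_⟩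
  · linear_combination a * hp₁ + b * hq₁ + z * hab
  · linear_combination a * hp₃ + b * hq₃ - l / (z - l) * hab

theorem breakpointLift_mem_liftTriangle {l z u d : ℝ} (hlz : l < z) (hzu : z < u)
    (hd : d ∈ Icc l u) : breakpointLift z d ∈ liftTriangle l z u := by
  rcases le_total d z with h | h
  · rw [breakpointLift_of_le h]
    refine ⟨h, le_rfl, ?_⟩
    rw [zero_div]
    exact div_nonneg (by linarith [hd.1]) (by linarith)
  · rw [breakpointLift_of_ge h]
    refine ⟨le_rfl, by linarith, ?_⟩
    rw [div_self (by linarith), div_le_one (by linarith)]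
    linarith [hd.2]

theorem liftTriangle_subset_convexHull {l z u : ℝ} (hlz : l < z) (hzu : z < u) :
    liftTriangle l z u ⊆ convexHull ℝ (breakpointLift z '' Icc l u) := by
  rintro ⟨p₁, p₂⟩ ⟨hp₁ : p₁ ≤ z, hp₂ : 0 ≤ p₂, hp₃ : p₂ / (u - z) ≤ (p₁ - l) / (z - l)⟩
  have hzl : 0 < z - l := by linarith
  have huz : 0 < u - z := by linarith
  have mem (d : ℝ) (hd : d ∈ Icc l u) :
      breakpointLift z d ∈ convexHull ℝ (breakpointLift z '' Icc l u) :=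
    subset_convexHull ℝ _ (mem_image_of_mem _ hd)
  have hb : 0 ≤ 1 - (z - p₁) / (z - l) - p₂ / (u - z) := by
    have : 1 - (z - p₁) / (z - l) = (p₁ - l) / (z - l) := by field_simp; ring
    linarith
  have hp : (p₁, p₂) = ((z - p₁) / (z - l)) • (l, (0 : ℝ))
      + (1 - (z - p₁) / (z - l) - p₂ / (u - z)) • (z, (0 : ℝ)) + (p₂ / (u - z)) • (z, u - z) := by
    ext <;> simp only [Prod.fst_add, Prod.smul_fst, Prod.snd_add, Prod.smul_snd, smul_eq_mul] <;>
      field_simp <;> ring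
  rw [hp]
  refine (convex_convexHull ℝ _).add_add_smul_mem ?_ ?_ ?_ (div_nonneg (by linarith) hzl.le)
    hb (div_nonneg hp₂ huz.le) (by ring)
  · simpa [breakpointLift_of_le hlz.le] using mem l ⟨le_rfl, by linarith⟩
  · simpa [breakpointLift_of_le le_rfl] using mem z ⟨hlz.le, hzu.le⟩
  · simpa [breakpointLift_of_ge hzu.le] using mem u ⟨by linarith, le_rfl⟩

/-- The convex hull of the single-breakpoint lifted segment
`Ξ′ = {(min(d,z), max(d−z,0)) : d ∈ [l,u]}` is the triangle
`{(d₁,d₂) : d₁ ≤ z, d₂ ≥ 0, (d₁ − l)/(z − l) ≥ d₂/(u − z)}`. -/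
theorem stmt_6 (l z u : ℝ) (hlz : l < z) (hzu : z < u) :
    convexHull ℝ ((fun d : ℝ => (min d z, max (d - z) 0)) '' Set.Icc l u) =
      {p : ℝ × ℝ | p.1 ≤ z ∧ 0 ≤ p.2 ∧ p.2 / (u - z) ≤ (p.1 - l) / (z - l)} := by
  change convexHull ℝ (breakpointLift z '' Icc l u) = liftTriangle l z u
  refine (convexHull_min ?_ (convex_liftTriangle l z u)).antisymm
    (liftTriangle_subset_convexHull hlz hzu)
  rintro _ ⟨d, hd, rfl⟩
  exact breakpointLift_mem_liftTriangle hlz hzu hd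
end

section
/- Consider minimizing a linear objective over decision rules: for any polytope Ξ′ ⊇ L(Ξ) (where Ξ = [l,u]^{T−1} and L applies a componentwise lifting), the optimal value of the piecewise-linear decision rule problem (linear rules over Ξ′) is at most the optimal value of the linear decision rule problem over Ξ. That is, PLDRs weakly dominate LDRs in the look-ahead model. -/
/-! Precomposing an affine rule `x` on `Ξ` with the retraction `R` gives the affine rule
`x ∘ R` on the lifted set `Ξ'`; since `R` maps `Ξ'` into `Ξ` and `R E' = E`, it is feasible
for the lifted problem with the same objective value. So every LDR value is a PLDR value,
and the infimum over the larger set is smaller. -/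

section DecisionRules

variable {k α β : Type*} [Ring k] [AddCommGroup α] [Module k α] [AddCommGroup β] [Module k β]

def affineRuleValues (Ξ : Set α) (g : α → k → Prop) (c : k) (E : α) : Set k :=
  {v | ∃ x : α →ᵃ[k] k, (∀ d ∈ Ξ, g d (x d)) ∧ v = c * x E}

theorem affineRuleValues_subset_comp (R : β →ᵃ[k] α) {Ξ : Set α} {Ξ' : Set β}
    (hR : Set.MapsTo R Ξ' Ξ) (g : α → k → Prop) (c : k) (E' : β) :
    affineRuleValues Ξ g c (R E') ⊆ affineRuleValues Ξ' (fun d' ↦ g (R d')) c E' := by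
  rintro v ⟨x, hx, rfl⟩
  exact ⟨x.comp R, fun d' hd' ↦ hx (R d') (hR hd'), rfl⟩

end DecisionRules

theorem stmt_10_general {T : ℕ} {β : Type*} [AddCommGroup β] [Module ℝ β]
    (Ξ : Set (Fin T → ℝ))
    (R : β →ₗ[ℝ] (Fin T → ℝ)) (Ξ' : Set β)
    (hR : ∀ d' ∈ Ξ', R d' ∈ Ξ)
    (g : (Fin T → ℝ) → ℝ → Prop) (c : ℝ)
    (E : Fin T → ℝ) (E' : β) (hE : R E' = E)
    (SLDR SPLDR : Set ℝ)
    (hSLDR : SLDR = {v | ∃ x : (Fin T → ℝ) →ᵃ[ℝ] ℝ,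
        (∀ d ∈ Ξ, g d (x d)) ∧ v = c * x E})
    (hSPLDR : SPLDR = {v | ∃ x' : β →ᵃ[ℝ] ℝ,
        (∀ d' ∈ Ξ', g (R d') (x' d')) ∧ v = c * x' E'})
    (hne : SLDR.Nonempty) (hbdd : BddBelow SPLDR) :
    sInf SPLDR ≤ sInf SLDR := by
  refine csInf_le_csInf hbdd hne ?_
  rw [hSLDR, hSPLDR, ← hE]
  exact affineRuleValues_subset_comp R.toAffineMap hR g c E'

/-- PLDRs weakly dominate LDRs in the look-ahead (minimization) model.
`Ξ = [l,u]^{T−1}` is a box, `L` is a (componentwise) lifting into the lifted space `β`,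
`R` is the linear retraction with `R ∘ L = id` on `Ξ`, and `Ξ′ ⊇ L(Ξ)` is a lifted
uncertainty set mapped by `R` into `Ξ`.  Constraints `g` depend on the uncertainty only
through the retracted point, the (linear) objective of an affine rule is evaluated at the
expectation points `E` and `E′` with `R E′ = E`.  Then the optimal value over lifted
affine rules (PLDRs) is at most the optimal value over affine rules on `Ξ` (LDRs). -/
theorem stmt_10 {T : ℕ} {β : Type*} [AddCommGroup β] [Module ℝ β]
    (l u : Fin T → ℝ) (Ξ : Set (Fin T → ℝ)) (hΞ : Ξ = Set.Icc l u)
    (L : (Fin T → ℝ) → β) (R : β →ₗ[ℝ] (Fin T → ℝ)) (Ξ' : Set β)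
    (hLΞ : L '' Ξ ⊆ Ξ') (hRL : ∀ d ∈ Ξ, R (L d) = d) (hR : ∀ d' ∈ Ξ', R d' ∈ Ξ)
    (g : (Fin T → ℝ) → ℝ → Prop) (c : ℝ)
    (E : Fin T → ℝ) (E' : β) (hE : R E' = E)
    (SLDR SPLDR : Set ℝ)
    (hSLDR : SLDR = {v | ∃ x : (Fin T → ℝ) →ᵃ[ℝ] ℝ,
        (∀ d ∈ Ξ, g d (x d)) ∧ v = c * x E})
    (hSPLDR : SPLDR = {v | ∃ x' : β →ᵃ[ℝ] ℝ,
        (∀ d' ∈ Ξ', g (R d') (x' d')) ∧ v = c * x' E'})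
    (hne : SLDR.Nonempty) (hbdd : BddBelow SPLDR) :
    sInf SPLDR ≤ sInf SLDR :=
  stmt_10_general Ξ R Ξ' hR g c E E' hE SLDR SPLDR hSLDR hSPLDR hne hbdd
end

section
/- Suppose the optimal value v(𝒵) of a lifted linear decision-rule minimization problem is defined using breakpoint set 𝒵, where constraints are imposed over the exact convex hull of the lifted hyper-rectangle. If 𝒵 ⊆ 𝒵′ (the breakpoint set is refined), then v(𝒵′) ≤ v(𝒵): adding breakpoints cannot worsen the optimal value. -/
/-! Every coarse decision rule `x` yields the fine rule `x ∘ P`: as `P` is linear and `P ∘ L' = L`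
on `Ξ`, `P` maps the convex hull of the fine lifted set into that of the coarse one, and
`R ∘ P = R'`, so `x ∘ P` is feasible, with the same objective since `P Ef = Ec`. The fine problem
thus attains every coarse value. -/

section Aggregation

variable {ι E E' V : Type*} [AddCommGroup E] [Module ℝ E] [AddCommGroup E'] [Module ℝ E']
  [AddCommMonoid V] [Module ℝ V]

theorem LinearMap.mapsTo_convexHull_image_of_eqOn (P : E' →ₗ[ℝ] E) {L' : ι → E'} {L : ι → E}
    {s : Set ι} (h : Set.EqOn (P ∘ L') L s) :
    Set.MapsTo P (convexHull ℝ (L' '' s)) (convexHull ℝ (L '' s)) := by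
  intro p hp
  rw [← h.image_eq, Set.image_comp, ← P.image_convexHull]
  exact Set.mem_image_of_mem P hp

/-- The objective values of the feasible lifted linear decision rules; `v(𝒵)` is their infimum. -/
def liftedRuleValues (L : ι → E) (s : Set ι) (R : E →ₗ[ℝ] V) (g : V → ℝ → Prop) (c : ℝ)
    (e : E) : Set ℝ :=
  {v | ∃ x : E →ᵃ[ℝ] ℝ, (∀ p ∈ convexHull ℝ (L '' s), g (R p) (x p)) ∧ v = c * x e}

theorem liftedRuleValues_subset_of_eqOn (P : E' →ₗ[ℝ] E) {L' : ι → E'} {L : ι → E}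
    {s : Set ι} (h : Set.EqOn (P ∘ L') L s) (R : E →ₗ[ℝ] V) (g : V → ℝ → Prop) (c : ℝ)
    (e' : E') :
    liftedRuleValues L s R g c (P e') ⊆ liftedRuleValues L' s (R ∘ₗ P) g c e' := by
  rintro v ⟨x, hfeas, rfl⟩
  exact ⟨x.comp P.toAffineMap,
    fun p' hp' => hfeas (P p') (P.mapsTo_convexHull_image_of_eqOn h hp'), rfl⟩

end Aggregation

theorem stmt_17_general {n : ℕ} {β β' : Type*}
    [AddCommGroup β] [Module ℝ β] [AddCommGroup β'] [Module ℝ β']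
    (Ξ : Set (Fin n → ℝ))
    (L : (Fin n → ℝ) → β) (L' : (Fin n → ℝ) → β')
    (P : β' →ₗ[ℝ] β)
    (hPL : ∀ d ∈ Ξ, P (L' d) = L d)
    (R : β →ₗ[ℝ] (Fin n → ℝ)) (R' : β' →ₗ[ℝ] (Fin n → ℝ))
    (hRP : R.comp P = R')
    (g : (Fin n → ℝ) → ℝ → Prop) (c : ℝ)
    (Ec : β) (Ef : β') (hE : P Ef = Ec)
    (Scoarse Sfine : Set ℝ)
    (hScoarse : Scoarse = {v | ∃ x : β →ᵃ[ℝ] ℝ,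
        (∀ p ∈ convexHull ℝ (L '' Ξ), g (R p) (x p)) ∧ v = c * x Ec})
    (hSfine : Sfine = {v | ∃ x' : β' →ᵃ[ℝ] ℝ,
        (∀ p' ∈ convexHull ℝ (L' '' Ξ), g (R' p') (x' p')) ∧ v = c * x' Ef})
    (hne : Scoarse.Nonempty) (hbdd : BddBelow Sfine) :
    sInf Sfine ≤ sInf Scoarse := by
  subst hScoarse hSfine hRP hE
  exact csInf_le_csInf hbdd hne (liftedRuleValues_subset_of_eqOn P hPL R g c Ef)

/-- Refining the breakpoint set cannot worsen the optimal value of the lifted linear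
decision-rule minimization problem over a hyper-rectangle `Ξ = [l,u]`.  The coarse
lifting `L` (breakpoints `𝒵`) and the fine lifting `L'` (breakpoints `𝒵′ ⊇ 𝒵`) are
related by a surjective linear aggregation map `P` with `P ∘ L' = L` on `Ξ` and
`R ∘ P = R'` for the linear retractions `R, R'`.  Constraints `g` are imposed over the
exact convex hulls of the lifted hyper-rectangle and depend on the uncertainty through
the retraction; objectives are evaluated at the expectation points `Ec`, `Ef` with
`P Ef = Ec`.  Then `v(𝒵′) ≤ v(𝒵)`. -/
theorem stmt_17 {n : ℕ} {β β' : Type*}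
    [AddCommGroup β] [Module ℝ β] [AddCommGroup β'] [Module ℝ β']
    (l u : Fin n → ℝ) (Ξ : Set (Fin n → ℝ)) (hΞ : Ξ = Set.Icc l u)
    (L : (Fin n → ℝ) → β) (L' : (Fin n → ℝ) → β')
    (P : β' →ₗ[ℝ] β) (hPsurj : Function.Surjective P)
    (hPL : ∀ d ∈ Ξ, P (L' d) = L d)
    (R : β →ₗ[ℝ] (Fin n → ℝ)) (R' : β' →ₗ[ℝ] (Fin n → ℝ))
    (hRP : R.comp P = R')
    (hRL : ∀ d ∈ Ξ, R (L d) = d) (hRL' : ∀ d ∈ Ξ, R' (L' d) = d)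
    (g : (Fin n → ℝ) → ℝ → Prop) (c : ℝ)
    (Ec : β) (Ef : β') (hE : P Ef = Ec)
    (Scoarse Sfine : Set ℝ)
    (hScoarse : Scoarse = {v | ∃ x : β →ᵃ[ℝ] ℝ,
        (∀ p ∈ convexHull ℝ (L '' Ξ), g (R p) (x p)) ∧ v = c * x Ec})
    (hSfine : Sfine = {v | ∃ x' : β' →ᵃ[ℝ] ℝ,
        (∀ p' ∈ convexHull ℝ (L' '' Ξ), g (R' p') (x' p')) ∧ v = c * x' Ef})
    (hne : Scoarse.Nonempty) (hbdd : BddBelow Sfine) :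
    sInf Sfine ≤ sInf Scoarse :=
  stmt_17_general Ξ L L' P hPL R R' hRP g c Ec Ef hE Scoarse Sfine hScoarse hSfine hne hbdd
end
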